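/- Let e be an antisymmetric transitive relation on a finite set E (that is, (x,y) ∈ e and (y,x) ∈ e imply x = y). Then the join-dependency relation D on the completely join-irreducible elements of the lattice Reg(e) is transitive; since D is irreflexive by definition, D is a strict ordering. -/

import Mathlib

/-- A binary relation (as a set of pairs) is transitive. -/
def TransRel {E : Type*} (a : Set (E × E)) : Prop :=
  ∀ x y z : E, (x, y) ∈ a → (y, z) ∈ a → (x, z) ∈ a

/-- The transitive closure of a set of pairs. -/
def tcl {E : Type*} (a : Set (E × E)) : Set (E × E) :=
  {p | Relation.TransGen (fun u v => (u, v) ∈ a) p.1 p.2}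

/-- The interior of `a` relative to `e`. -/
def tint {E : Type*} (e a : Set (E × E)) : Set (E × E) :=
  e \ tcl (e \ a)

/-- `a` is a closed subset of `e`. -/
def IsClosedIn {E : Type*} (e a : Set (E × E)) : Prop :=
  a ⊆ e ∧ TransRel a

/-- `a` is an open subset of `e`. -/
def IsOpenIn {E : Type*} (e a : Set (E × E)) : Prop :=
  a ⊆ e ∧ TransRel (e \ a)

/-- `a` is a clopen subset of `e`. -/
def IsClopenIn {E : Type*} (e a : Set (E × E)) : Prop :=
  a ⊆ e ∧ TransRel a ∧ TransRel (e \ a)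

/-- `a` is a regular closed subset of `e`. -/
def RegClosed {E : Type*} (e a : Set (E × E)) : Prop :=
  a ⊆ e ∧ a = tcl (tint e a)

/-- The reflexive preordering `x ⊴ y` associated with `e`. -/
def rle {E : Type*} (e : Set (E × E)) (x y : E) : Prop :=
  (x, y) ∈ e ∨ x = y

/-- `x ≡ y`: `x ⊴ y` and `y ⊴ x`. -/
def eqv {E : Type*} (e : Set (E × E)) (x y : E) : Prop :=
  rle e x y ∧ rle e y x

/-- `e` is square-free. -/
def SqFree {E : Type*} (e : Set (E × E)) : Prop :=
  ∀ a b x y : E, (a, b) ∈ e → rle e a x → rle e x b → rle e a y → rle e y b →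
    rle e x y ∨ rle e y x

/-- The interval `[a,b] = {x | a ⊴ x ⊴ b}`. -/
def cce {E : Type*} (e : Set (E × E)) (a b : E) : Set E :=
  {x | rle e a x ∧ rle e x b}

/-- `(a,b,U) ∈ F(e)`. -/
def Ftriple {E : Type*} (e : Set (E × E)) (a b : E) (U : Set E) : Prop :=
  (a, b) ∈ e ∧ U ⊆ cce e a b ∧ (a ≠ b → a ∉ U ∧ b ∈ U)

/-- The clopen set `⟨a,b,U⟩ = e ∩ (({a} ∪ Uᶜ) × ({b} ∪ U))`. -/
def pji {E : Type*} (e : Set (E × E)) (a b : E) (U : Set E) : Set (E × E) :=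
  e ∩ ((({a} : Set E) ∪ (cce e a b \ U)) ×ˢ (({b} : Set E) ∪ U))

/-- The set `p₋` associated with `p = ⟨a,b,U⟩`: if `a ≠ b` it is
`p \ ([a] × [b])`, and if `a = b` it is `p \ {(a,a)}`. -/
def pminus {E : Type*} (e : Set (E × E)) (a b : E) (U : Set E) : Set (E × E) :=
  {z ∈ pji e a b U | ¬ ((a ≠ b ∧ eqv e z.1 a ∧ eqv e z.2 b) ∨ (a = b ∧ z = (a, a)))}

/-- `q'` is the unique lower cover of the completely join-irreducible element `p` of
`Reg(e)`. -/
def IsLowerCoverIn {E : Type*} (e p q' : Set (E × E)) : Prop :=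
  RegClosed e q' ∧ q' ⊂ p ∧ ∀ x, RegClosed e x → x ⊂ p → x ⊆ q'

/-- `p` is a completely join-irreducible element of `Reg(e)`. -/
def CJIrr {E : Type*} (e p : Set (E × E)) : Prop :=
  RegClosed e p ∧ ∃ q', IsLowerCoverIn e p q'

/-- The join-dependency relation on completely join-irreducible elements of `Reg(e)`. -/
def JoinDep {E : Type*} (e p q : Set (E × E)) : Prop :=
  p ≠ q ∧ ∃ q', IsLowerCoverIn e q q' ∧
    ∃ x, RegClosed e x ∧ p ⊆ tcl (q ∪ x) ∧ ¬ p ⊆ tcl (q' ∪ x)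

/-!
Every completely join-irreducible element of `Reg(e)` is one of the clopen sets `⟨a,b,U⟩`, and
its lower cover is `⟨a,b,U⟩ \ {(a,b)}`. So `⟨a,b,U⟩ D ⟨a',b',U'⟩` can be decided on the triples:
it holds exactly when `a ⊴ a'`, `b' ⊴ b`, `a' ≠ b'`, `(a,b) ≠ (a',b')` and `U`, `U'` agree
strictly between `a'` and `b'`. Necessity: a pair of `⟨a,b,U⟩` that lies in `cl(q ∪ x)` but not
in `cl(q₋ ∪ x)` must be routed through `(a',b')`. Sufficiency: `x` is the complement of a
suitable `⟨a,b,W⟩`. The combinatorial condition is plainly transitive.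
-/

def AntisymmPairs {E : Type*} (e : Set (E × E)) : Prop :=
  ∀ x y : E, (x, y) ∈ e → (y, x) ∈ e → x = y

section TransitiveClosure
variable {E : Type*} {s t : Set (E × E)}

lemma subset_tcl : s ⊆ tcl s := fun _ h => Relation.TransGen.single h

lemma transRel_tcl : TransRel (tcl s) := fun _ _ _ h₁ h₂ => Relation.TransGen.trans h₁ h₂

lemma tcl_subset (hst : s ⊆ t) (ht : TransRel t) : tcl s ⊆ t := by
  rintro ⟨x, y⟩ (h : Relation.TransGen _ x y)
  induction h with
  | single h => exact hst h
  | tail _ h ih => exact ht _ _ _ ih (hst h)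

lemma tcl_eq_self (hs : TransRel s) : tcl s = s :=
  (tcl_subset subset_rfl hs).antisymm subset_tcl

lemma tcl_mono (hst : s ⊆ t) : tcl s ⊆ tcl t :=
  tcl_subset (hst.trans subset_tcl) transRel_tcl

lemma tcl_union_singleton {u v c d : E} (h : (c, d) ∈ tcl (s ∪ {(u, v)})) :
    (c, d) ∈ tcl s ∨ rle (tcl s) c u ∧ rle (tcl s) v d := by
  change Relation.TransGen _ c d at h
  induction h with
  | single h =>
    rcases h with h | h
    · exact Or.inl (subset_tcl h)
    · obtain ⟨rfl, rfl⟩ := Prod.mk.inj h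
      exact Or.inr ⟨Or.inr rfl, Or.inr rfl⟩
  | tail _ h ih =>
    rcases h with h | h
    · rcases ih with ih | ⟨hc, hd⟩
      · exact Or.inl (transRel_tcl _ _ _ ih (subset_tcl h))
      · refine Or.inr ⟨hc, Or.inl ?_⟩
        rcases hd with hd | rfl
        · exact transRel_tcl _ _ _ hd (subset_tcl h)
        · exact subset_tcl h
    · obtain ⟨rfl, rfl⟩ := Prod.mk.inj h
      rcases ih with ih | ⟨hc, -⟩
      · exact Or.inr ⟨Or.inl ih, Or.inr rfl⟩
      · exact Or.inr ⟨hc, Or.inr rfl⟩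

end TransitiveClosure

section Preorder
variable {E : Type*} {e s t : Set (E × E)} {x y z : E}

lemma rle_of_mem (h : (x, y) ∈ e) : rle e x y := Or.inl h

lemma rle.mono (hst : s ⊆ t) (h : rle s x y) : rle t x y := h.imp_left (@hst _)

lemma mem_of_rle_of_ne (h : rle e x y) (hne : x ≠ y) : (x, y) ∈ e :=
  h.resolve_right hne

lemma rle_trans (he : TransRel e) (hxy : rle e x y) (hyz : rle e y z) : rle e x z := by
  rcases hxy with hxy | rfl
  · rcases hyz with hyz | rfl
    · exact Or.inl (he _ _ _ hxy hyz)
    · exact Or.inl hxy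
  · exact hyz

lemma rle_antisymm (hanti : AntisymmPairs e) (hxy : rle e x y) (hyx : rle e y x) : x = y := by
  rcases hxy with hxy | rfl
  · rcases hyx with hyx | rfl
    · exact hanti _ _ hxy hyx
    · rfl
  · rfl

lemma mem_cce_sdiff (hy : y ∈ cce e x z) (hyx : y ≠ x) (hyz : y ≠ z) :
    y ∈ cce e x z \ {x, z} := ⟨hy, by simp [hyx, hyz]⟩

lemma eq_of_mem_cce_self (hanti : AntisymmPairs e) (h : y ∈ cce e x x) : y = x :=
  rle_antisymm hanti h.2 h.1

lemma TransRel.mem_of_rle_of_mem_of_rle {c u v d : E} (ht : TransRel t) (hcu : rle t c u)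
    (huv : (u, v) ∈ t) (hvd : rle t v d) : (c, d) ∈ t := by
  have hcv : (c, v) ∈ t := by
    rcases hcu with hcu | rfl
    exacts [ht _ _ _ hcu huv, huv]
  rcases hvd with hvd | rfl
  exacts [ht _ _ _ hcv hvd, hcv]

lemma TransRel.eq_of_rle_of_rle_of_not_mem {c d : E} (ht : TransRel t) (hcz : rle t c z)
    (hzd : rle t z d) (hcd : (c, d) ∉ t) : c = z ∧ z = d := by
  rcases hcz with hcz | rfl
  · rcases hzd with hzd | rfl
    exacts [absurd (ht _ _ _ hcz hzd) hcd, absurd hcz hcd]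
  · rcases hzd with hzd | rfl
    exacts [absurd hzd hcd, ⟨rfl, rfl⟩]

end Preorder

section Clopen
variable {E : Type*} {e s : Set (E × E)}

lemma RegClosed.transRel (hs : RegClosed e s) : TransRel s := by
  rw [hs.2]; exact transRel_tcl

lemma IsClopenIn.regClosed (hs : IsClopenIn e s) : RegClosed e s := by
  refine ⟨hs.1, ?_⟩
  rw [tint, tcl_eq_self hs.2.2, Set.sdiff_sdiff_cancel_left hs.1, tcl_eq_self hs.2.1]

lemma IsClopenIn.compl (hs : IsClopenIn e s) : IsClopenIn e (e \ s) :=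
  ⟨Set.sdiff_subset, hs.2.2, by rw [Set.sdiff_sdiff_cancel_left hs.1]; exact hs.2.1⟩

lemma tint_subset : tint e s ⊆ s := fun z hz => by
  by_contra h
  exact hz.2 (subset_tcl ⟨hz.1, h⟩)

lemma IsLowerCoverIn.unique {p q₁ q₂ : Set (E × E)} (h₁ : IsLowerCoverIn e p q₁)
    (h₂ : IsLowerCoverIn e p q₂) : q₁ = q₂ :=
  (h₂.2.2 _ h₁.1 h₁.2.1).antisymm (h₁.2.2 _ h₂.1 h₂.2.1)

end Clopen

section Triple
variable {E : Type*} {e s : Set (E × E)} {a b c d : E} {U : Set E}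

lemma mem_pji :
    (c, d) ∈ pji e a b U ↔
      (c, d) ∈ e ∧ (c = a ∨ c ∈ cce e a b ∧ c ∉ U) ∧ (d = b ∨ d ∈ U) := by
  simp [pji, Set.mem_prod]

lemma pji_subset : pji e a b U ⊆ e := Set.inter_subset_left

lemma Ftriple.pair_mem_pji (hF : Ftriple e a b U) : (a, b) ∈ pji e a b U :=
  mem_pji.2 ⟨hF.1, Or.inl rfl, Or.inl rfl⟩

lemma Ftriple.rle_of_mem_pji (hF : Ftriple e a b U) (h : (c, d) ∈ pji e a b U) :
    rle e a c ∧ rle e d b := by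
  obtain ⟨-, hc, hd⟩ := mem_pji.1 h
  constructor
  · rcases hc with rfl | hc
    exacts [Or.inr rfl, hc.1.1]
  · rcases hd with rfl | hd
    exacts [Or.inr rfl, (hF.2.1 hd).2]

lemma Ftriple.eq_of_left_of_right (hF : Ftriple e a b U) (hl : c = a ∨ c ∈ cce e a b ∧ c ∉ U)
    (hr : c = b ∨ c ∈ U) : a = b := by
  by_contra hab
  obtain ⟨haU, hbU⟩ := hF.2.2 hab
  rcases hl with rfl | ⟨-, hcU⟩ <;> rcases hr with rfl | hr
  exacts [hab rfl, haU hr, hcU hbU, hcU hr]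

lemma Ftriple.pji_self (hanti : AntisymmPairs e) (hF : Ftriple e a a U) :
    pji e a a U = {(a, a)} := by
  ext ⟨c, d⟩
  refine ⟨fun h => ?_, fun h => by rw [Set.mem_singleton_iff.1 h]; exact hF.pair_mem_pji⟩
  obtain ⟨-, hc, hd⟩ := mem_pji.1 h
  have hc : c = a := hc.elim id fun hc => eq_of_mem_cce_self hanti hc.1
  have hd : d = a := hd.elim id fun hd => eq_of_mem_cce_self hanti (hF.2.1 hd)
  simp [hc, hd]

lemma Ftriple.eq_of_mem_pji_of_mem_pji (hanti : AntisymmPairs e) (hF : Ftriple e a b U)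
    {x y z : E} (hxy : (x, y) ∈ pji e a b U) (hyz : (y, z) ∈ pji e a b U) : x = y ∧ y = z := by
  obtain rfl := hF.eq_of_left_of_right (mem_pji.1 hyz).2.1 (mem_pji.1 hxy).2.2
  rw [hF.pji_self hanti] at hxy hyz
  obtain ⟨rfl, rfl⟩ := Prod.mk.inj hxy
  exact ⟨rfl, (Prod.mk.inj hyz).2.symm⟩

lemma Ftriple.transRel_of_subset (hanti : AntisymmPairs e) (hF : Ftriple e a b U)
    (hs : s ⊆ pji e a b U) : TransRel s := by
  intro x y z hxy hyz
  obtain ⟨rfl, -⟩ := hF.eq_of_mem_pji_of_mem_pji hanti (hs hxy) (hs hyz)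
  exact hyz

lemma Ftriple.transRel_compl_pji (he : TransRel e) (hF : Ftriple e a b U) :
    TransRel (e \ pji e a b U) := by
  rintro x y z ⟨hxy, hxy'⟩ ⟨hyz, hyz'⟩
  refine ⟨he _ _ _ hxy hyz, fun hxz => ?_⟩
  obtain ⟨-, hx, hz⟩ := mem_pji.1 hxz
  obtain ⟨hax, hzb⟩ := hF.rle_of_mem_pji hxz
  by_cases hy : y = b ∨ y ∈ U
  · exact hxy' (mem_pji.2 ⟨hxy, hx, hy⟩)
  · have hy' : y ∈ cce e a b :=
      ⟨rle_trans he hax (rle_of_mem hxy), rle_trans he (rle_of_mem hyz) hzb⟩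
    exact hyz' (mem_pji.2 ⟨hyz, Or.inr ⟨hy', fun h => hy (Or.inr h)⟩, hz⟩)

lemma Ftriple.isClopenIn_pji (he : TransRel e) (hanti : AntisymmPairs e)
    (hF : Ftriple e a b U) : IsClopenIn e (pji e a b U) :=
  ⟨pji_subset, hF.transRel_of_subset hanti subset_rfl, hF.transRel_compl_pji he⟩

lemma Ftriple.transRel_compl_pji_diff (he : TransRel e) (hanti : AntisymmPairs e)
    (hF : Ftriple e a b U) : TransRel (e \ (pji e a b U \ {(a, b)})) := by
  rintro x y z ⟨hxy, hxy'⟩ ⟨hyz, hyz'⟩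
  refine ⟨he _ _ _ hxy hyz, fun ⟨hxz, hne⟩ => hne ?_⟩
  obtain ⟨hax, hzb⟩ := hF.rle_of_mem_pji hxz
  by_cases hxyp : (x, y) ∈ pji e a b U
  · obtain ⟨rfl, rfl⟩ := Prod.mk.inj (not_not.1 fun h => hxy' ⟨hxyp, h⟩)
    rw [rle_antisymm hanti hzb (rle_of_mem hyz)]; rfl
  by_cases hyzp : (y, z) ∈ pji e a b U
  · obtain ⟨rfl, rfl⟩ := Prod.mk.inj (not_not.1 fun h => hyz' ⟨hyzp, h⟩)
    rw [rle_antisymm hanti (rle_of_mem hxy) hax]; rfl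
  exact absurd hxz (hF.transRel_compl_pji he _ _ _ ⟨hxy, hxyp⟩ ⟨hyz, hyzp⟩).2

/-- Subsets of `⟨a,b,U⟩` are transitive, so `x = int x`; a pair of `⟨a,b,U⟩ \ x` would then
link `a` to `b` in `e \ x`. -/
lemma Ftriple.eq_pji_of_pair_mem (hanti : AntisymmPairs e) (hF : Ftriple e a b U)
    {x : Set (E × E)} (hx : RegClosed e x) (hxp : x ⊆ pji e a b U) (hab : (a, b) ∈ x) :
    x = pji e a b U := by
  have hint : (a, b) ∉ tcl (e \ x) := by
    have hx' : x = tint e x :=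
      hx.2.trans (tcl_eq_self (hF.transRel_of_subset hanti (tint_subset.trans hxp)))
    exact (hx' ▸ hab).2
  refine hxp.antisymm fun ⟨u, v⟩ huv => by_contra fun huvx => hint ?_
  obtain ⟨hau, hvb⟩ := hF.rle_of_mem_pji huv
  have huv' : (u, v) ∈ e \ x := ⟨pji_subset huv, huvx⟩
  refine transRel_tcl.mem_of_rle_of_mem_of_rle ?_ (subset_tcl huv') ?_
  · refine (em (a = u)).elim (fun h => Or.inr h) fun hne => Or.inl (subset_tcl ?_)
    refine ⟨mem_of_rle_of_ne hau hne, fun h => hne ?_⟩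
    exact (hF.eq_of_mem_pji_of_mem_pji hanti (hxp h) huv).1
  · refine (em (v = b)).elim (fun h => Or.inr h) fun hne => Or.inl (subset_tcl ?_)
    refine ⟨mem_of_rle_of_ne hvb hne, fun h => hne ?_⟩
    exact (hF.eq_of_mem_pji_of_mem_pji hanti huv (hxp h)).2

lemma Ftriple.isLowerCoverIn (he : TransRel e) (hanti : AntisymmPairs e)
    (hF : Ftriple e a b U) : IsLowerCoverIn e (pji e a b U) (pji e a b U \ {(a, b)}) := by
  refine ⟨IsClopenIn.regClosed ⟨Set.sdiff_subset.trans pji_subset,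
    hF.transRel_of_subset hanti Set.sdiff_subset, hF.transRel_compl_pji_diff he hanti⟩, ?_, ?_⟩
  · exact Set.sdiff_singleton_ssubset.2 hF.pair_mem_pji
  · intro x hx hxp z hz
    refine ⟨hxp.subset hz, fun h => hxp.ne ?_⟩
    exact hF.eq_pji_of_pair_mem hanti hx hxp.subset (h ▸ hz)

lemma Ftriple.eq_of_pji_eq (hanti : AntisymmPairs e) {a' b' : E} {U' : Set E}
    (hF : Ftriple e a b U) (hF' : Ftriple e a' b' U') (h : pji e a b U = pji e a' b' U') :
    a = a' ∧ b = b' := by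
  have h₁ := hF'.rle_of_mem_pji (h ▸ hF.pair_mem_pji)
  have h₂ := hF.rle_of_mem_pji (h.symm ▸ hF'.pair_mem_pji)
  exact ⟨rle_antisymm hanti h₂.1 h₁.1, rle_antisymm hanti h₁.2 h₂.2⟩

lemma Ftriple.eq_of_agree {U' : Set E} (hF : Ftriple e a b U) (hF' : Ftriple e a b U')
    (hab : a ≠ b) (h : ∀ y ∈ cce e a b \ {a, b}, y ∈ U ↔ y ∈ U') : U = U' := by
  ext y
  by_cases hyb : y = b
  · subst hyb
    exact iff_of_true (hF.2.2 hab).2 (hF'.2.2 hab).2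
  refine ⟨fun hy => ?_, fun hy => ?_⟩
  · have hya : y ≠ a := fun h => (hF.2.2 hab).1 (h ▸ hy)
    exact (h y (mem_cce_sdiff (hF.2.1 hy) hya hyb)).1 hy
  · have hya : y ≠ a := fun h => (hF'.2.2 hab).1 (h ▸ hy)
    exact (h y (mem_cce_sdiff (hF'.2.1 hy) hya hyb)).2 hy

end Triple

section Structure
variable {E : Type*} {e p : Set (E × E)} {a b : E}

lemma exists_ftriple_pji_subset (h : (a, b) ∈ tint e p) :
    ∃ U, Ftriple e a b U ∧ pji e a b U ⊆ p := by
  set s := tcl (e \ p)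
  refine ⟨{y ∈ cce e a b | y ≠ a ∧ (a, y) ∉ s}, ⟨h.1, fun y hy => hy.1, fun hab => ?_⟩, ?_⟩
  · exact ⟨fun h => h.2.1 rfl, ⟨rle_of_mem h.1, Or.inr rfl⟩, Ne.symm hab, h.2⟩
  rintro ⟨x, y⟩ hxy
  obtain ⟨hxye, hx, hy⟩ := mem_pji.1 hxy
  have hay : (a, y) ∉ s := by
    rcases hy with rfl | hy
    exacts [h.2, hy.2.2]
  by_contra hxyp
  have hxys : (x, y) ∈ s := subset_tcl ⟨hxye, hxyp⟩
  rcases hx with rfl | ⟨hx, hxU⟩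
  · exact hay hxys
  · by_cases hxa : x = a
    · exact hay (hxa ▸ hxys)
    · have hax : (a, x) ∈ s := not_not.1 fun h => hxU ⟨hx, hxa, h⟩
      exact hay (transRel_tcl _ _ _ hax hxys)

/-- `p = cl(int p)` is the join of the sets `⟨a,b,U⟩ ⊆ p` with `(a,b) ∈ int p`, so they cannot
all lie below `p₋`. -/
lemma CJIrr.exists_eq_pji (he : TransRel e) (hanti : AntisymmPairs e) (hp : CJIrr e p) :
    ∃ a b U, Ftriple e a b U ∧ p = pji e a b U := by
  obtain ⟨hreg, pm, hpm, hpmp, hmax⟩ := hp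
  have hkey : ∃ z ∈ tint e p, ∃ U, Ftriple e z.1 z.2 U ∧ pji e z.1 z.2 U ⊆ p ∧
      ¬ pji e z.1 z.2 U ⊆ pm := by
    by_contra! hall
    have hint : tint e p ⊆ pm := fun z hz => by
      obtain ⟨U, hF, hUp⟩ := exists_ftriple_pji_subset hz
      exact hall z hz U hF hUp hF.pair_mem_pji
    have hppm : p ⊆ pm := by
      rw [hreg.2, ← tcl_eq_self hpm.transRel]
      exact tcl_mono hint
    exact hpmp.not_subset hppm
  obtain ⟨⟨a, b⟩, -, U, hF, hUp, hUpm⟩ := hkey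
  refine ⟨a, b, U, hF, by_contra fun hne => hUpm (hmax _ ?_ ?_)⟩
  · exact (hF.isClopenIn_pji he hanti).regClosed
  · exact hUp.ssubset_of_ne (Ne.symm hne)

end Structure

structure TripleDep {E : Type*} (e : Set (E × E)) (a b : E) (U : Set E) (a' b' : E)
    (U' : Set E) : Prop where
  rle_left : rle e a a'
  rle_right : rle e b' b
  ne : a' ≠ b'
  pair_ne : (a, b) ≠ (a', b')
  agree : ∀ y ∈ cce e a' b' \ {a', b'}, y ∈ U ↔ y ∈ U'

section Dependency
variable {E : Type*} {e : Set (E × E)} {a b a' b' a'' b'' : E} {U U' U'' : Set E}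

lemma TripleDep.trans (he : TransRel e) (hanti : AntisymmPairs e)
    (h₁ : TripleDep e a b U a' b' U') (h₂ : TripleDep e a' b' U' a'' b'' U'') :
    TripleDep e a b U a'' b'' U'' where
  rle_left := rle_trans he h₁.rle_left h₂.rle_left
  rle_right := rle_trans he h₂.rle_right h₁.rle_right
  ne := h₂.ne
  pair_ne h := by
    obtain ⟨rfl, rfl⟩ := Prod.mk.inj h
    apply h₁.pair_ne
    rw [rle_antisymm hanti h₁.rle_left h₂.rle_left, rle_antisymm hanti h₂.rle_right h₁.rle_right]
  agree y hy := by
    have hya : y ≠ a'' := fun h => hy.2 (by simp [h])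
    have hyb : y ≠ b'' := fun h => hy.2 (by simp [h])
    obtain ⟨hy₁, hy₂⟩ := hy.1
    have hy' : y ∈ cce e a' b' \ {a', b'} := mem_cce_sdiff
      ⟨rle_trans he h₂.rle_left hy₁, rle_trans he hy₂ h₂.rle_right⟩
      (fun h => hya (rle_antisymm hanti (h ▸ h₂.rle_left) hy₁))
      (fun h => hyb (rle_antisymm hanti hy₂ (h ▸ h₂.rle_right)))
    exact (h₁.agree y hy').trans (h₂.agree y hy)

end Dependency

def RoutesThrough {E : Type*} (t p : Set (E × E)) (u v : E) : Prop :=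
  ∀ ⦃c d : E⦄, (c, d) ∈ p → (c, d) ∈ t ∨ rle t c u ∧ rle t v d

section Necessity
variable {E : Type*} {e t : Set (E × E)} {a b a' b' c d y : E} {U U' : Set E}

lemma RoutesThrough.mem_of_mem (he : TransRel e) (hanti : AntisymmPairs e)
    (ht : TransRel t) (hte : t ⊆ e) (hqt : pji e a' b' U' \ {(a', b')} ⊆ t)
    (hroute : RoutesThrough t (pji e a b U) a' b') (hcd : (c, d) ∈ pji e a b U)
    (hcdt : (c, d) ∉ t) (hy : y ∈ cce e a' b' \ {a', b'}) (hyU : y ∈ U) : y ∈ U' := by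
  obtain ⟨hca, hbd⟩ := (hroute hcd).resolve_left hcdt
  obtain ⟨⟨hay, hyb⟩, hy⟩ := hy
  simp only [Set.mem_insert_iff, Set.mem_singleton_iff, not_or] at hy
  by_contra hyU'
  have hyb' : (y, b') ∈ t := hqt ⟨mem_pji.2 ⟨mem_of_rle_of_ne hyb hy.2,
    Or.inr ⟨⟨hay, hyb⟩, hyU'⟩, Or.inl rfl⟩, fun h => hy.1 (Prod.mk.inj h).1⟩
  have hcy : (c, y) ∈ pji e a b U := by
    refine mem_pji.2 ⟨mem_of_rle_of_ne (rle_trans he (hca.mono hte) hay) fun h => hy.1 ?_,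
      (mem_pji.1 hcd).2.1, Or.inr hyU⟩
    exact (rle_antisymm hanti hay (h ▸ hca.mono hte)).symm
  rcases hroute hcy with hcyt | ⟨-, hby⟩
  · exact hcdt (ht.mem_of_rle_of_mem_of_rle (Or.inl hcyt) hyb' hbd)
  · exact hy.2 (rle_antisymm hanti hyb (hby.mono hte))

lemma RoutesThrough.mem_of_mem' (he : TransRel e) (hanti : AntisymmPairs e)
    (hF : Ftriple e a b U) (ht : TransRel t) (hte : t ⊆ e)
    (hqt : pji e a' b' U' \ {(a', b')} ⊆ t) (hroute : RoutesThrough t (pji e a b U) a' b')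
    (hcd : (c, d) ∈ pji e a b U) (hcdt : (c, d) ∉ t) (hy : y ∈ cce e a' b' \ {a', b'})
    (hyU' : y ∈ U') : y ∈ U := by
  obtain ⟨hca, hbd⟩ := (hroute hcd).resolve_left hcdt
  obtain ⟨hac, hdb⟩ := hF.rle_of_mem_pji hcd
  obtain ⟨⟨hay, hyb⟩, hy⟩ := hy
  simp only [Set.mem_insert_iff, Set.mem_singleton_iff, not_or] at hy
  by_contra hyU
  have hay' : (a', y) ∈ t := hqt ⟨mem_pji.2 ⟨mem_of_rle_of_ne hay (Ne.symm hy.1),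
    Or.inl rfl, Or.inr hyU'⟩, fun h => hy.2 (Prod.mk.inj h).2⟩
  have hyab : y ∈ cce e a b :=
    ⟨rle_trans he (rle_trans he hac (hca.mono hte)) hay,
      rle_trans he (rle_trans he hyb (hbd.mono hte)) hdb⟩
  have hyd : (y, d) ∈ pji e a b U := by
    refine mem_pji.2 ⟨mem_of_rle_of_ne (rle_trans he hyb (hbd.mono hte)) fun h => hy.2 ?_,
      Or.inr ⟨hyab, hyU⟩, (mem_pji.1 hcd).2.2⟩
    exact rle_antisymm hanti hyb (h ▸ hbd.mono hte)
  rcases hroute hyd with hydt | ⟨hya, -⟩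
  · exact hcdt (ht.mem_of_rle_of_mem_of_rle hca (ht _ _ _ hay' hydt) (Or.inr rfl))
  · exact hy.1 (rle_antisymm hanti (hya.mono hte) hay)

lemma Ftriple.ne_of_routesThrough (hanti : AntisymmPairs e) (hF : Ftriple e a b U)
    (hF' : Ftriple e a' b' U') (hpq : pji e a b U ≠ pji e a' b' U') (ht : TransRel t)
    (hroute : RoutesThrough t (pji e a b U) a' b') (hcd : (c, d) ∈ pji e a b U)
    (hcdt : (c, d) ∉ t) : a' ≠ b' := by
  rintro rfl
  obtain ⟨hca, hbd⟩ := (hroute hcd).resolve_left hcdt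
  obtain ⟨rfl, rfl⟩ := ht.eq_of_rle_of_rle_of_not_mem hca hbd hcdt
  obtain rfl := hF.eq_of_left_of_right (mem_pji.1 hcd).2.1 (mem_pji.1 hcd).2.2
  rw [hF.pji_self hanti] at hcd hpq
  rw [hF'.pji_self hanti, ← Set.mem_singleton_iff.1 hcd] at hpq
  exact hpq rfl

lemma JoinDep.tripleDep (he : TransRel e) (hanti : AntisymmPairs e) (hF : Ftriple e a b U)
    (hF' : Ftriple e a' b' U') (h : JoinDep e (pji e a b U) (pji e a' b' U')) :
    TripleDep e a b U a' b' U' := by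
  obtain ⟨hpq, qm, hqm, x, hx, hpx, hpx'⟩ := h
  rw [hqm.unique (hF'.isLowerCoverIn he hanti)] at hpx'
  set s := (pji e a' b' U' \ {(a', b')}) ∪ x
  have hqx : pji e a' b' U' ∪ x = s ∪ {(a', b')} := by
    rw [Set.union_right_comm, Set.sdiff_union_of_subset
      (Set.singleton_subset_iff.2 hF'.pair_mem_pji)]
  have hroute : RoutesThrough (tcl s) (pji e a b U) a' b' := fun c d hcd =>
    tcl_union_singleton (hqx ▸ hpx hcd)
  have hte : tcl s ⊆ e := tcl_subset (Set.union_subset (Set.sdiff_subset.trans pji_subset) hx.1) he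
  have hqt : pji e a' b' U' \ {(a', b')} ⊆ tcl s := Set.subset_union_left.trans subset_tcl
  obtain ⟨⟨c, d⟩, hcd, hcdt⟩ := Set.not_subset.1 hpx'
  have hne := hF.ne_of_routesThrough hanti hF' hpq transRel_tcl hroute hcd hcdt
  have hagree : ∀ y ∈ cce e a' b' \ {a', b'}, y ∈ U ↔ y ∈ U' := fun y hy =>
    ⟨hroute.mem_of_mem he hanti transRel_tcl hte hqt hcd hcdt hy,
      hroute.mem_of_mem' he hanti hF transRel_tcl hte hqt hcd hcdt hy⟩
  obtain ⟨hca, hbd⟩ := (hroute hcd).resolve_left hcdt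
  refine ⟨rle_trans he (hF.rle_of_mem_pji hcd).1 (hca.mono hte),
    rle_trans he (hbd.mono hte) (hF.rle_of_mem_pji hcd).2, hne, fun h => ?_, hagree⟩
  obtain ⟨rfl, rfl⟩ := Prod.mk.inj h
  exact hpq (by rw [hF.eq_of_agree hF' hne hagree])

end Necessity

/-- With `x = e \ ⟨a,b,W⟩`, every pair of `⟨a,b,U⟩` outside `x` runs from below `a'` to above
`b'`, while `x` still contains `⟨a',b',U'⟩ \ {(a',b')}`. -/
def depWitness {E : Type*} (e : Set (E × E)) (a b : E) (U : Set E) (a' b' : E) : Set E :=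
  {y ∈ cce e a b | y ∈ U ∧ rle e b' y ∨ y ∉ U ∧ ¬ rle e y a'}

section Sufficiency
variable {E : Type*} {e s : Set (E × E)} {a b a' b' c d : E} {U U' : Set E}

lemma rle_sdiff (h : rle e c d) (hs : (c, d) ∉ s) : rle (e \ s) c d :=
  h.imp_left fun h => ⟨h, hs⟩

lemma TripleDep.mem_cce (he : TransRel e)
    (h : TripleDep e a b U a' b' U') {y : E} (hy : y ∈ cce e a' b') : y ∈ cce e a b :=
  ⟨rle_trans he h.rle_left hy.1, rle_trans he hy.2 h.rle_right⟩

lemma TripleDep.ftriple_depWitness (hF : Ftriple e a b U) (h : TripleDep e a b U a' b' U') :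
    Ftriple e a b (depWitness e a b U a' b') := by
  refine ⟨hF.1, fun y hy => hy.1, fun hab => ⟨?_, ?_⟩⟩
  · rintro ⟨-, ⟨haU, -⟩ | ⟨-, ha⟩⟩
    exacts [(hF.2.2 hab).1 haU, ha h.rle_left]
  · exact ⟨⟨rle_of_mem hF.1, Or.inr rfl⟩, Or.inl ⟨(hF.2.2 hab).2, h.rle_right⟩⟩

lemma TripleDep.not_mem_depWitness (hanti : AntisymmPairs e) (hF' : Ftriple e a' b' U')
    (h : TripleDep e a b U a' b' U') : a' ∉ depWitness e a b U a' b' := by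
  rintro ⟨-, ⟨-, hba⟩ | ⟨-, ha⟩⟩
  exacts [h.ne (rle_antisymm hanti (rle_of_mem hF'.1) hba), ha (Or.inr rfl)]

lemma TripleDep.mem_depWitness (he : TransRel e) (hanti : AntisymmPairs e)
    (hF' : Ftriple e a' b' U') (h : TripleDep e a b U a' b' U') :
    b' ∈ depWitness e a b U a' b' := by
  refine ⟨h.mem_cce he ⟨rle_of_mem hF'.1, Or.inr rfl⟩, ?_⟩
  by_cases hb : b' ∈ U
  · exact Or.inl ⟨hb, Or.inr rfl⟩
  · exact Or.inr ⟨hb, fun hba => h.ne (rle_antisymm hanti (rle_of_mem hF'.1) hba)⟩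

lemma TripleDep.not_mem_pji_depWitness_left (hanti : AntisymmPairs e)
    (hF' : Ftriple e a' b' U') (h : TripleDep e a b U a' b' U') :
    (c, a') ∉ pji e a b (depWitness e a b U a' b') := fun hca => by
  rcases (mem_pji.1 hca).2.2 with hab | ha
  · exact h.ne (rle_antisymm hanti (rle_of_mem hF'.1) (hab ▸ h.rle_right))
  · exact h.not_mem_depWitness hanti hF' ha

lemma TripleDep.not_mem_pji_depWitness_right (he : TransRel e) (hanti : AntisymmPairs e)
    (hF' : Ftriple e a' b' U') (h : TripleDep e a b U a' b' U') :
    (b', d) ∉ pji e a b (depWitness e a b U a' b') := fun hbd => by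
  rcases (mem_pji.1 hbd).2.1 with hba | ⟨-, hb⟩
  · exact h.ne (rle_antisymm hanti (rle_of_mem hF'.1) (hba ▸ h.rle_left))
  · exact hb (h.mem_depWitness he hanti hF')

lemma TripleDep.rle_of_mem_pji_depWitness (h : TripleDep e a b U a' b' U')
    (hcd : (c, d) ∈ pji e a b U) (hcdW : (c, d) ∈ pji e a b (depWitness e a b U a' b')) :
    rle e c a' ∧ rle e b' d := by
  obtain ⟨-, hc, hd⟩ := mem_pji.1 hcd
  obtain ⟨-, hcW, hdW⟩ := mem_pji.1 hcdW
  constructor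
  · rcases hc with rfl | ⟨hc, hcU⟩
    · exact h.rle_left
    rcases hcW with rfl | ⟨-, hcW⟩
    · exact h.rle_left
    exact not_not.1 fun hca => hcW ⟨hc, Or.inr ⟨hcU, hca⟩⟩
  · rcases hd with rfl | hdU
    · exact h.rle_right
    rcases hdW with rfl | ⟨-, ⟨-, hbd⟩ | ⟨hdU', -⟩⟩
    exacts [h.rle_right, hbd, absurd hdU hdU']

lemma TripleDep.pji_sdiff_subset (he : TransRel e) (hanti : AntisymmPairs e)
    (hF' : Ftriple e a' b' U') (h : TripleDep e a b U a' b' U') :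
    pji e a' b' U' \ {(a', b')} ⊆ e \ pji e a b (depWitness e a b U a' b') := by
  rintro ⟨c, d⟩ ⟨hcd, hne⟩
  refine ⟨pji_subset hcd, fun hcdW => ?_⟩
  obtain ⟨-, hc, hd⟩ := mem_pji.1 hcd
  obtain ⟨hac, hdb⟩ := hF'.rle_of_mem_pji hcd
  obtain ⟨-, hcW, hdW⟩ := mem_pji.1 hcdW
  obtain ⟨ha'U', hb'U'⟩ := hF'.2.2 h.ne
  by_cases hca : c = a'
  · have hdb' : d ≠ b' := fun hdb' => hne (by rw [hca, hdb']; rfl)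
    have hdU' := hd.resolve_left hdb'
    have hda : d ≠ a' := fun hda => ha'U' (hda ▸ hdU')
    have hdU : d ∈ U := (h.agree d (mem_cce_sdiff (hF'.2.1 hdU') hda hdb')).2 hdU'
    rcases hdW with rfl | ⟨-, ⟨-, hbd⟩ | ⟨hdU₀, -⟩⟩
    · exact hdb' (rle_antisymm hanti hdb h.rle_right)
    · exact hdb' (rle_antisymm hanti hdb hbd)
    · exact hdU₀ hdU
  · obtain ⟨hc', hcU'⟩ := hc.resolve_left hca
    have hcb : c ≠ b' := fun hcb => hcU' (hcb ▸ hb'U')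
    have hcU : c ∉ U := fun hcU => hcU' ((h.agree c (mem_cce_sdiff hc' hca hcb)).1 hcU)
    rcases hcW with rfl | ⟨-, hcW⟩
    · exact hca (rle_antisymm hanti h.rle_left hac)
    · refine hca (rle_antisymm hanti (not_not.1 fun hn => hcW ⟨?_, Or.inr ⟨hcU, hn⟩⟩) hac)
      exact h.mem_cce he hc'

lemma TripleDep.joinDep (he : TransRel e) (hanti : AntisymmPairs e) (hF : Ftriple e a b U)
    (hF' : Ftriple e a' b' U') (h : TripleDep e a b U a' b' U') :
    JoinDep e (pji e a b U) (pji e a' b' U') := by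
  set W := depWitness e a b U a' b'
  have hFW := h.ftriple_depWitness hF
  refine ⟨fun hpq => h.pair_ne ?_, _, hF'.isLowerCoverIn he hanti, e \ pji e a b W,
    (hFW.isClopenIn_pji he hanti).compl.regClosed, ?_, fun hsub => ?_⟩
  · obtain ⟨rfl, rfl⟩ := hF.eq_of_pji_eq hanti hF' hpq
    rfl
  · rintro ⟨c, d⟩ hcd
    by_cases hcdW : (c, d) ∉ pji e a b W
    · exact subset_tcl (Or.inr ⟨pji_subset hcd, hcdW⟩)
    obtain ⟨hca, hbd⟩ := h.rle_of_mem_pji_depWitness hcd (not_not.1 hcdW)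
    have hx : e \ pji e a b W ⊆ tcl (pji e a' b' U' ∪ (e \ pji e a b W)) :=
      Set.subset_union_right.trans subset_tcl
    refine transRel_tcl.mem_of_rle_of_mem_of_rle ?_ (subset_tcl (Or.inl hF'.pair_mem_pji)) ?_
    · exact (rle_sdiff hca (h.not_mem_pji_depWitness_left hanti hF')).mono hx
    · exact (rle_sdiff hbd (h.not_mem_pji_depWitness_right he hanti hF')).mono hx
  · have hcl := tcl_subset (Set.union_subset (h.pji_sdiff_subset he hanti hF') subset_rfl)
      (hFW.transRel_compl_pji he)
    exact (hcl (hsub hF.pair_mem_pji)).2 hFW.pair_mem_pji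

end Sufficiency

theorem joinDependency_transitive_general {E : Type*} (e : Set (E × E))
    (he : TransRel e) (hanti : ∀ x y : E, (x, y) ∈ e → (y, x) ∈ e → x = y) :
    (∀ p q r : Set (E × E), CJIrr e p → CJIrr e q → CJIrr e r →
      JoinDep e p q → JoinDep e q r → JoinDep e p r) ∧
    (∀ p : Set (E × E), CJIrr e p → ¬ JoinDep e p p) := by
  refine ⟨fun p q r hp hq hr hpq hqr => ?_, fun p _ hpp => hpp.1 rfl⟩
  obtain ⟨a, b, U, hF, rfl⟩ := hp.exists_eq_pji he hanti
  obtain ⟨a', b', U', hF', rfl⟩ := hq.exists_eq_pji he hanti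
  obtain ⟨a'', b'', U'', hF'', rfl⟩ := hr.exists_eq_pji he hanti
  have hpq' := hpq.tripleDep he hanti hF hF'
  have hqr' := hqr.tripleDep he hanti hF' hF''
  exact (hpq'.trans he hanti hqr').joinDep he hanti hF hF''

/-- for an antisymmetric transitive relation `e` on a finite set, the
join-dependency relation on the completely join-irreducible elements of `Reg(e)` is
transitive; being irreflexive by definition, it is a strict ordering. -/
theorem joinDependency_transitive {E : Type*} [Finite E] (e : Set (E × E))
    (he : TransRel e) (hanti : ∀ x y : E, (x, y) ∈ e → (y, x) ∈ e → x = y) :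
    (∀ p q r : Set (E × E), CJIrr e p → CJIrr e q → CJIrr e r →
      JoinDep e p q → JoinDep e q r → JoinDep e p r) ∧
    (∀ p : Set (E × E), CJIrr e p → ¬ JoinDep e p p) :=
  joinDependency_transitive_general e he hanti
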